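/- arXiv:2008.04123 — 10 statements merged into one kernel-verified Lean document; each statement's English description precedes it below -/
import Mathlib

section
/- Let G be a finite non-abelian group, H a subgroup of G, and g ∈ G. If g ∉ K(H,G), then in the relative g-noncommuting graph Γ^g_{H,G} every vertex x ∈ H has degree |G| − 1, and every vertex x ∈ G \ H has degree |H|. -/
/-! Since `K(H, G)` is closed under inversion and contains `[x, y]` as soon as `x ∈ H` or
`y ∈ H`, the assumption `g ∉ K(H, G)` makes the commutator conditions vacuous: a vertex of `H`
is adjacent to every other vertex, and a vertex outside `H` exactly to the elements of `H`. -/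

/-- The relative `g`-noncommuting graph of a group `G` with respect to a subgroup `H`:
vertices are the elements of `G`, and distinct `x`, `y` are adjacent iff
(`x ∈ H` or `y ∈ H`) and the commutator `x⁻¹ * y⁻¹ * x * y` is neither `g` nor `g⁻¹`. -/
def relGraph {G : Type*} [Group G] (H : Subgroup G) (g : G) : SimpleGraph G where
  Adj x y := x ≠ y ∧ (x ∈ H ∨ y ∈ H) ∧ x⁻¹ * y⁻¹ * x * y ≠ g ∧ x⁻¹ * y⁻¹ * x * y ≠ g⁻¹
  symm := by
    constructor
    rintro x y ⟨hxy, hmem, h1, h2⟩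
    have key : (x⁻¹ * y⁻¹ * x * y)⁻¹ = y⁻¹ * x⁻¹ * y * x := by group
    refine ⟨hxy.symm, hmem.symm, fun h => h2 ?_, fun h => h1 ?_⟩
    · rw [← inv_inv (x⁻¹ * y⁻¹ * x * y), key, h]
    · rw [← inv_inv (x⁻¹ * y⁻¹ * x * y), key, h, inv_inv]
  loopless := ⟨fun x h => h.1 rfl⟩

theorem Set.ncard_compl_singleton {α : Type*} (a : α) :
    ({a}ᶜ : Set α).ncard = Nat.card α - 1 := by
  rcases finite_or_infinite α with hα | hα
  · rw [Set.ncard_compl, Set.ncard_singleton]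
  · rw [(Set.finite_singleton a).infinite_compl.ncard, Nat.card_eq_zero_of_infinite]

section RelCommutatorSet

variable {G : Type*} [Group G] (H : Subgroup G)

/-- The set `K(H, G)`. -/
def relCommutatorSet : Set G := {u | ∃ x ∈ H, ∃ y : G, x⁻¹ * y⁻¹ * x * y = u}

variable {H}

theorem commutator_mem_relCommutatorSet_of_left_mem {x : G} (hx : x ∈ H) (y : G) :
    x⁻¹ * y⁻¹ * x * y ∈ relCommutatorSet H :=
  ⟨x, hx, y, rfl⟩

theorem inv_mem_relCommutatorSet {u : G} (hu : u ∈ relCommutatorSet H) :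
    u⁻¹ ∈ relCommutatorSet H := by
  obtain ⟨x, hx, y, rfl⟩ := hu
  -- `[x, y]⁻¹ = [x⁻¹, y * x]`
  exact ⟨x⁻¹, H.inv_mem hx, y * x, by group⟩

theorem commutator_mem_relCommutatorSet_of_right_mem (x : G) {y : G} (hy : y ∈ H) :
    x⁻¹ * y⁻¹ * x * y ∈ relCommutatorSet H := by
  have h := inv_mem_relCommutatorSet (commutator_mem_relCommutatorSet_of_left_mem hy x)
  rwa [show (y⁻¹ * x⁻¹ * y * x)⁻¹ = x⁻¹ * y⁻¹ * x * y by group] at h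

end RelCommutatorSet

section RelGraph

variable {G : Type*} [Group G] {H : Subgroup G} {g : G}

theorem relGraph_adj_iff (hg : g ∉ relCommutatorSet H) {x y : G} :
    (relGraph H g).Adj x y ↔ x ≠ y ∧ (x ∈ H ∨ y ∈ H) := by
  refine ⟨fun h => ⟨h.1, h.2.1⟩, fun ⟨hne, hmem⟩ => ?_⟩
  have hK : x⁻¹ * y⁻¹ * x * y ∈ relCommutatorSet H := hmem.elim
    (commutator_mem_relCommutatorSet_of_left_mem · y)
    (commutator_mem_relCommutatorSet_of_right_mem x)
  refine ⟨hne, hmem, fun h => hg (h ▸ hK), fun h => hg ?_⟩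
  simpa [h] using inv_mem_relCommutatorSet hK

theorem relGraph_neighborSet_of_mem (hg : g ∉ relCommutatorSet H) {x : G} (hx : x ∈ H) :
    (relGraph H g).neighborSet x = {x}ᶜ := by
  ext y
  simp [relGraph_adj_iff hg, hx, eq_comm]

theorem relGraph_neighborSet_of_notMem (hg : g ∉ relCommutatorSet H) {x : G} (hx : x ∉ H) :
    (relGraph H g).neighborSet x = H := by
  ext y
  simp only [SimpleGraph.mem_neighborSet, relGraph_adj_iff hg, hx, false_or, SetLike.mem_coe]
  exact ⟨And.right, fun hy => ⟨fun h => hx (h ▸ hy), hy⟩⟩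

end RelGraph

theorem stmt0_general {G : Type*} [Group G]
    (H : Subgroup G) (g : G)
    (hg : g ∉ {u : G | ∃ x ∈ H, ∃ y : G, x⁻¹ * y⁻¹ * x * y = u}) :
    (∀ x ∈ H, ((relGraph H g).neighborSet x).ncard = Nat.card G - 1) ∧
    (∀ x : G, x ∉ H → ((relGraph H g).neighborSet x).ncard = Nat.card H) :=
  ⟨fun x hx => by rw [relGraph_neighborSet_of_mem hg hx, Set.ncard_compl_singleton],
    fun x hx => by rw [relGraph_neighborSet_of_notMem hg hx]; exact (Nat.card_coe_set_eq _).symm⟩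

theorem stmt0 {G : Type*} [Group G] [Fintype G]
    (hG : ¬ ∀ a b : G, a * b = b * a)
    (H : Subgroup G) (g : G)
    (hg : g ∉ {u : G | ∃ x ∈ H, ∃ y : G, x⁻¹ * y⁻¹ * x * y = u}) :
    (∀ x ∈ H, ((relGraph H g).neighborSet x).ncard = Nat.card G - 1) ∧
    (∀ x : G, x ∉ H → ((relGraph H g).neighborSet x).ncard = Nat.card H) :=
  stmt0_general H g hg
end

section
/- Let G be a finite non-abelian group, H a subgroup of G, and g ∈ G with g ≠ 1 and g² = 1. Let x ∈ H be a vertex of the relative g-noncommuting graph Γ^g_{H,G}. If x is conjugate in G to xg, then the degree of x equals |G| − |C_G(x)| − 1. -/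
/-!
For `x ∈ H` and an involution `g`, the non-neighbours of `x` are `x` itself and the
`y` with `[x, y] = g`, i.e. with `y⁻¹ x y = x g`. When `x` is conjugate to `x g`, these `y`
form a right coset of `C_G(x)`, and `x` is not among them since `g ≠ 1`.
-/

section Conjugators

variable {G : Type*} [Group G]

theorem commutator_eq_iff_conj_eq (x y g : G) :
    x⁻¹ * y⁻¹ * x * y = g ↔ y⁻¹ * x * y = x * g := by
  rw [show x⁻¹ * y⁻¹ * x * y = x⁻¹ * (y⁻¹ * x * y) by group, inv_mul_eq_iff_eq_mul]

theorem setOf_conj_eq_eq_image_centralizer {x z y₀ : G} (hy₀ : y₀⁻¹ * x * y₀ = z) :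
    {y : G | y⁻¹ * x * y = z} = (· * y₀) '' (Subgroup.centralizer {x} : Set G) := by
  ext y
  simp only [Set.mem_ofPred_eq, Set.mem_image, SetLike.mem_coe,
    Subgroup.mem_centralizer_singleton_iff]
  constructor
  · intro hy
    refine ⟨y * y₀⁻¹, ?_, by group⟩
    calc y * y₀⁻¹ * x = y * (y₀⁻¹ * x * y₀) * y₀⁻¹ := by group
      _ = y * (y⁻¹ * x * y) * y₀⁻¹ := by rw [hy₀, hy]
      _ = x * (y * y₀⁻¹) := by group
  · rintro ⟨c, hc, rfl⟩
    calc (c * y₀)⁻¹ * x * (c * y₀) = y₀⁻¹ * (c⁻¹ * (c * x)) * y₀ := by rw [hc]; group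
      _ = z := by rw [← hy₀]; group

theorem ncard_setOf_conj_eq {x z : G} (hxz : ∃ y₀ : G, y₀⁻¹ * x * y₀ = z) :
    {y : G | y⁻¹ * x * y = z}.ncard = Nat.card (Subgroup.centralizer ({x} : Set G)) := by
  obtain ⟨y₀, hy₀⟩ := hxz
  rw [setOf_conj_eq_eq_image_centralizer hy₀,
    Set.ncard_image_of_injective _ (mul_left_injective y₀), ← Nat.card_coe_set_eq,
    SetLike.coe_sort_coe]

end Conjugators

theorem relGraph_neighborSet_of_mem_s3 {G : Type*} [Group G] {H : Subgroup G} {g x : G}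
    (hg : g⁻¹ = g) (hx : x ∈ H) :
    (relGraph H g).neighborSet x = (insert x {y | x⁻¹ * y⁻¹ * x * y = g})ᶜ := by
  ext y
  simp only [SimpleGraph.mem_neighborSet, relGraph, hg, and_self, Set.mem_compl_iff,
    Set.mem_insert_iff, Set.mem_ofPred_eq, not_or, eq_comm (a := y), true_or, hx, true_and]

theorem stmt3_general {G : Type*} [Group G] [Fintype G]
    (H : Subgroup G) (g : G) (hg1 : g ≠ 1) (hg2 : g ^ 2 = 1)
    (x : G) (hx : x ∈ H)
    (hconj : ∃ y : G, y⁻¹ * x * y = x * g) :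
    (((relGraph H g).neighborSet x).ncard : ℤ)
      = (Nat.card G : ℤ) - (Nat.card (Subgroup.centralizer ({x} : Set G)) : ℤ) - 1 := by
  have hg : g⁻¹ = g := inv_eq_of_mul_eq_one_right (by rw [← pow_two, hg2])
  set S := {y : G | x⁻¹ * y⁻¹ * x * y = g}
  have hS : S.ncard = Nat.card (Subgroup.centralizer ({x} : Set G)) := by
    simp only [S, commutator_eq_iff_conj_eq]
    exact ncard_setOf_conj_eq hconj
  have hxS : x ∉ S := fun h => hg1 (h.symm.trans (by group))
  have hsum := Set.ncard_add_ncard_compl (insert x S)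
  rw [Set.ncard_insert_of_notMem hxS, hS, ← relGraph_neighborSet_of_mem_s3 hg hx] at hsum
  omega

theorem stmt3 {G : Type*} [Group G] [Fintype G]
    (hG : ¬ ∀ a b : G, a * b = b * a)
    (H : Subgroup G) (g : G) (hg1 : g ≠ 1) (hg2 : g ^ 2 = 1)
    (x : G) (hx : x ∈ H)
    (hconj : ∃ y : G, y⁻¹ * x * y = x * g) :
    (((relGraph H g).neighborSet x).ncard : ℤ)
      = (Nat.card G : ℤ) - (Nat.card (Subgroup.centralizer ({x} : Set G)) : ℤ) - 1 :=
  stmt3_general H g hg1 hg2 x hx hconj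
end

section
/- Let G be a finite non-abelian group, H a subgroup of G, and g ∈ G with g ≠ 1 and g² = 1. Let x ∈ G \ H be a vertex of the relative g-noncommuting graph Γ^g_{H,G}. If there exists y ∈ H with y⁻¹xy = xg, then the degree of x equals |H| − |C_H(x)|. -/
/-!
For `x ∉ H` and `g` an involution, the neighbours of `x` are the `y ∈ H` with `[x, y] ≠ g`, so
the degree of `x` is `|H|` minus the number of `y ∈ H` with `[x, y] = g`. Since
`[x, y] = [x, y₀]` exactly when `y y₀⁻¹` centralises `x`, the latter set is the right coset
`C_H(x) y₀` as soon as one `y₀ ∈ H` has `[x, y₀] = g`, i.e. `y₀⁻¹ x y₀ = x g`.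
-/

open Set

section Group

variable {G : Type*} [Group G]

theorem commutator_eq_commutator_iff_commute (x y z : G) :
    x⁻¹ * y⁻¹ * x * y = x⁻¹ * z⁻¹ * x * z ↔ Commute x (y * z⁻¹) := by
  rw [Commute, SemiconjBy]
  constructor
  · intro h
    calc x * (y * z⁻¹) = y * x * (x⁻¹ * y⁻¹ * x * y) * z⁻¹ := by group
      _ = y * z⁻¹ * x := by rw [h]; group
  · intro h
    calc x⁻¹ * y⁻¹ * x * y = x⁻¹ * z⁻¹ * (y * z⁻¹)⁻¹ * (x * (y * z⁻¹)) * z := by group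
      _ = x⁻¹ * z⁻¹ * x * z := by rw [h]; group

theorem image_mul_right_centralizer_eq (H : Subgroup G) {x y₀ : G} (hy₀ : y₀ ∈ H) :
    (· * y₀) '' {c | c ∈ H ∧ x * c = c * x} =
      {y | y ∈ H ∧ x⁻¹ * y⁻¹ * x * y = x⁻¹ * y₀⁻¹ * x * y₀} := by
  ext y
  simp only [mem_image, mem_ofPred_eq, commutator_eq_commutator_iff_commute]
  constructor
  · rintro ⟨c, ⟨hc, hxc⟩, rfl⟩
    refine ⟨H.mul_mem hc hy₀, ?_⟩
    rwa [mul_inv_cancel_right]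
  · rintro ⟨hy, hxy⟩
    exact ⟨y * y₀⁻¹, ⟨H.mul_mem hy (H.inv_mem hy₀), hxy⟩, inv_mul_cancel_right y y₀⟩

theorem ncard_commutator_fiber_eq (H : Subgroup G) {x y₀ : G} (hy₀ : y₀ ∈ H) :
    {y | y ∈ H ∧ x⁻¹ * y⁻¹ * x * y = x⁻¹ * y₀⁻¹ * x * y₀}.ncard =
      {c | c ∈ H ∧ x * c = c * x}.ncard := by
  rw [← image_mul_right_centralizer_eq H hy₀,
    ncard_image_of_injective _ (mul_left_injective y₀)]

theorem Subgroup.ncard_sep_add_ncard_sep_not [Finite G] (H : Subgroup G) (p : G → Prop) :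
    {y | y ∈ H ∧ p y}.ncard + {y | y ∈ H ∧ ¬ p y}.ncard = Nat.card H :=
  (ncard_inter_add_ncard_sdiff_eq_ncard (H : Set G) {y | p y}).trans
    (Nat.card_coe_set_eq (H : Set G)).symm

theorem relGraph_neighborSet_of_notMem_s6 {H : Subgroup G} {g x : G} (hg : g⁻¹ = g) (hx : x ∉ H) :
    (relGraph H g).neighborSet x = {y | y ∈ H ∧ x⁻¹ * y⁻¹ * x * y ≠ g} := by
  ext y
  simp only [SimpleGraph.mem_neighborSet, relGraph, mem_ofPred_eq, hg, and_self, or_iff_right hx]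
  exact and_iff_right_of_imp fun h => (ne_of_mem_of_not_mem h.1 hx).symm

end Group

theorem stmt6_general {G : Type*} [Group G] [Fintype G]
    (H : Subgroup G) (g : G) (hg2 : g ^ 2 = 1)
    (x : G) (hx : x ∉ H)
    (hconj : ∃ y ∈ H, y⁻¹ * x * y = x * g) :
    (((relGraph H g).neighborSet x).ncard : ℤ)
      = (Nat.card H : ℤ) - ({y : G | y ∈ H ∧ x * y = y * x}.ncard : ℤ) := by
  obtain ⟨y₀, hy₀H, hy₀⟩ := hconj
  have hg : g⁻¹ = g := inv_eq_of_mul_eq_one_left (pow_two g ▸ hg2)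
  have hcomm : x⁻¹ * y₀⁻¹ * x * y₀ = g := by
    rw [mul_assoc x⁻¹, mul_assoc, hy₀, inv_mul_cancel_left]
  have hfiber : {y | y ∈ H ∧ x⁻¹ * y⁻¹ * x * y = g}.ncard =
      {c | c ∈ H ∧ x * c = c * x}.ncard :=
    hcomm ▸ ncard_commutator_fiber_eq H hy₀H
  have hsplit := H.ncard_sep_add_ncard_sep_not (fun y => x⁻¹ * y⁻¹ * x * y = g)
  rw [relGraph_neighborSet_of_notMem_s6 hg hx]
  simp only [ne_eq]
  omega

theorem stmt6 {G : Type*} [Group G] [Fintype G]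
    (hG : ¬ ∀ a b : G, a * b = b * a)
    (H : Subgroup G) (g : G) (hg1 : g ≠ 1) (hg2 : g ^ 2 = 1)
    (x : G) (hx : x ∉ H)
    (hconj : ∃ y ∈ H, y⁻¹ * x * y = x * g) :
    (((relGraph H g).neighborSet x).ncard : ℤ)
      = (Nat.card H : ℤ) - ({y : G | y ∈ H ∧ x * y = y * x}.ncard : ℤ) :=
  stmt6_general H g hg2 x hx hconj
end

section
/- Let G be a finite non-abelian group, H a subgroup of G, and g ∈ G with g ≠ 1. If H has an element of order 3, then the relative g-noncommuting graph Γ^g_{H,G} contains a triangle (three pairwise adjacent vertices), i.e. Γ^g_{H,G} is not triangle-free. -/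
theorem relGraph_adj_of_commute {G : Type*} [Group G] {H : Subgroup G} {g x y : G}
    (hg : g ≠ 1) (hne : x ≠ y) (hmem : x ∈ H ∨ y ∈ H) (hxy : Commute x y) :
    (relGraph H g).Adj x y := by
  have hcomm : x⁻¹ * y⁻¹ * x * y = 1 := by simp [mul_assoc, hxy.eq]
  exact ⟨hne, hmem, hcomm ▸ hg.symm, hcomm ▸ (inv_ne_one.mpr hg).symm⟩

theorem relGraph_triangle_one_self_sq {G : Type*} [Group G] {H : Subgroup G} {g x : G}
    (hg : g ≠ 1) (hx : x ∈ H) (hx2 : x ^ 2 ≠ 1) :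
    (relGraph H g).Adj 1 x ∧ (relGraph H g).Adj x (x ^ 2) ∧ (relGraph H g).Adj 1 (x ^ 2) := by
  have hx1 : x ≠ 1 := by rintro rfl; exact hx2 (one_pow 2)
  have hx_ne_sq : x ≠ x ^ 2 := fun h => hx1 (by rwa [pow_two, left_eq_mul] at h)
  exact ⟨relGraph_adj_of_commute hg hx1.symm (.inr hx) (.one_left x),
    relGraph_adj_of_commute hg hx_ne_sq (.inl hx) (.self_pow x 2),
    relGraph_adj_of_commute hg (Ne.symm hx2) (.inr (pow_mem hx 2)) (.one_left _)⟩

theorem stmt7_general {G : Type*} [Group G]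
    (H : Subgroup G) (g : G) (hg : g ≠ 1)
    (hH : ∃ x : G, x ∈ H ∧ orderOf x = 3) :
    ∃ a b c : G, (relGraph H g).Adj a b ∧ (relGraph H g).Adj b c ∧
      (relGraph H g).Adj a c := by
  obtain ⟨x, hxH, hx3⟩ := hH
  have hx2 : x ^ 2 ≠ 1 := fun h => by
    have := orderOf_dvd_of_pow_eq_one h
    rw [hx3] at this
    norm_num at this
  exact ⟨1, x, x ^ 2, relGraph_triangle_one_self_sq hg hxH hx2⟩

theorem stmt7 {G : Type*} [Group G] [Fintype G]
    (hG : ¬ ∀ a b : G, a * b = b * a)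
    (H : Subgroup G) (g : G) (hg : g ≠ 1)
    (hH : ∃ x : G, x ∈ H ∧ orderOf x = 3) :
    ∃ a b c : G, (relGraph H g).Adj a b ∧ (relGraph H g).Adj b c ∧
      (relGraph H g).Adj a c :=
  stmt7_general H g hg hH
end

section
/- Let G be a finite non-abelian group, H a subgroup of G with H ≠ Z(H,G) and |H| ≠ 2, and g ∈ K(H,G) with g ≠ 1. Then the relative g-noncommuting graph Γ^g_{H,G} is not a tree (i.e. it is not both connected and acyclic). -/
theorem SimpleGraph.not_isAcyclic_of_triangle {V : Type*} {G : SimpleGraph V} {a b c : V}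
    (hab : G.Adj a b) (hac : G.Adj a c) (hbc : G.Adj b c) : ¬ G.IsAcyclic := by
  classical
  obtain ⟨u, w, hw, -⟩ :=
    G.is3Clique_iff_exists_cycle_length_three.mp ⟨_, is3Clique_triple_iff.mpr ⟨hab, hac, hbc⟩⟩
  exact fun h => h w hw

theorem exists_ne_one_ne_commute {K : Type*} [Group K] {a b : K} (ha : a ≠ 1) (hb : b ≠ 1)
    (hab : a ≠ b) : ∃ c d : K, c ≠ 1 ∧ d ≠ 1 ∧ c ≠ d ∧ Commute c d := by
  by_cases hsq : ∀ c : K, c ^ 2 = 1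
  · exact ⟨a, b, ha, hb, hab,
      Commute.of_orderOf_dvd_two (fun c => orderOf_dvd_of_pow_eq_one (hsq c)) a b⟩
  · obtain ⟨c, hc⟩ := not_forall.mp hsq
    refine ⟨c, c ^ 2, fun h => hc (by rw [h, one_pow]), hc, fun h => ?_, Commute.self_pow c 2⟩
    rw [pow_two, left_eq_mul] at h
    exact hc (by rw [h, one_pow])

theorem Subgroup.exists_mem_ne_one_ne {G : Type*} [Group G] {H : Subgroup G} {x : G}
    (hx : x ∈ H) (hx1 : x ≠ 1) (hH2 : Nat.card H ≠ 2) : ∃ y ∈ H, y ≠ 1 ∧ y ≠ x := by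
  by_contra! hcon
  refine hH2 ((Nat.card_eq_two_iff' 1).mpr ⟨⟨x, hx⟩, fun h => hx1 (congrArg Subtype.val h), ?_⟩)
  rintro ⟨y, hy⟩ hy1
  exact Subtype.ext (hcon y hy fun h => hy1 (Subtype.ext h))

theorem stmt9_general {G : Type*} [Group G]
    (H : Subgroup G)
    (hHZ : (H : Set G) ≠ {x : G | x ∈ H ∧ ∀ y : G, x * y = y * x})
    (hH2 : Nat.card H ≠ 2)
    (g : G) (hg : g ≠ 1) :
    ¬ (relGraph H g).IsTree := by
  obtain ⟨x, hxH, hxZ⟩ : ∃ x ∈ H, ¬ ∀ y : G, x * y = y * x := by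
    by_contra! hcon
    exact hHZ (Set.ext fun z => ⟨fun hz => ⟨hz, hcon z hz⟩, And.left⟩)
  have hx1 : x ≠ 1 := by rintro rfl; simp at hxZ
  obtain ⟨y, hyH, hy1, hyx⟩ := H.exists_mem_ne_one_ne hxH hx1 hH2
  obtain ⟨c, d, hc1, hd1, hcd, hcomm⟩ := exists_ne_one_ne_commute (a := (⟨x, hxH⟩ : H))
    (b := ⟨y, hyH⟩) (by simpa using hx1) (by simpa using hy1) (by simpa using hyx.symm)
  replace hc1 : (c : G) ≠ 1 := by simpa using hc1
  replace hd1 : (d : G) ≠ 1 := by simpa using hd1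
  intro htree
  refine SimpleGraph.not_isAcyclic_of_triangle (G := relGraph H g) (a := 1) (b := c) (c := d)
    ?_ ?_ ?_ htree.isAcyclic
  · exact relGraph_adj_of_commute hg hc1.symm (.inl H.one_mem) (Commute.one_left _)
  · exact relGraph_adj_of_commute hg hd1.symm (.inl H.one_mem) (Commute.one_left _)
  · exact relGraph_adj_of_commute hg (Subtype.coe_injective.ne hcd) (.inl c.2)
      (congrArg Subtype.val hcomm.eq)

theorem stmt9 {G : Type*} [Group G] [Fintype G]
    (hG : ¬ ∀ a b : G, a * b = b * a)
    (H : Subgroup G)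
    (hHZ : (H : Set G) ≠ {x : G | x ∈ H ∧ ∀ y : G, x * y = y * x})
    (hH2 : Nat.card H ≠ 2)
    (g : G) (hgK : ∃ x ∈ H, ∃ y : G, x⁻¹ * y⁻¹ * x * y = g) (hg : g ≠ 1) :
    ¬ (relGraph H g).IsTree :=
  stmt9_general H hHZ hH2 g hg
end

section
/- Let G be a finite non-abelian group, H a subgroup of G with H ≠ Z(H,G), and g ∈ K(H,G) with g ≠ 1. If |H| ∉ {2, 3, 6}, then the relative g-noncommuting graph Γ^g_{H,G} has no vertex of degree 1. -/
section CommutatorFiber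

variable {G : Type*} [Group G]

def commutatorFiber (K : Subgroup G) (x a : G) : Set G :=
  {y | y ∈ K ∧ x⁻¹ * y⁻¹ * x * y = a}

lemma commutatorFiber_eq_image {K : Subgroup G} {x a y₀ : G}
    (hy₀ : y₀ ∈ commutatorFiber K x a) :
    commutatorFiber K x a = (· * y₀) '' ((K ⊓ Subgroup.centralizer {x} : Subgroup G) : Set G) := by
  obtain ⟨hy₀K, rfl⟩ := hy₀
  ext y
  simp only [commutatorFiber, Set.mem_ofPred_eq, Set.mem_image, SetLike.mem_coe,
    Subgroup.mem_inf, Subgroup.mem_centralizer_singleton_iff]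
  constructor
  · rintro ⟨hyK, hy⟩
    refine ⟨y * y₀⁻¹, ⟨K.mul_mem hyK (K.inv_mem hy₀K), ?_⟩, by group⟩
    have hconj : y⁻¹ * x * y = y₀⁻¹ * x * y₀ := by
      simpa only [mul_assoc, mul_right_inj] using hy
    calc y * y₀⁻¹ * x = y * (y₀⁻¹ * x * y₀) * y₀⁻¹ := by group
      _ = y * (y⁻¹ * x * y) * y₀⁻¹ := by rw [hconj]
      _ = x * (y * y₀⁻¹) := by group
  · rintro ⟨c, ⟨hcK, hc⟩, rfl⟩
    refine ⟨K.mul_mem hcK hy₀K, ?_⟩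
    calc x⁻¹ * (c * y₀)⁻¹ * x * (c * y₀) = x⁻¹ * y₀⁻¹ * (c⁻¹ * (x * c)) * y₀ := by group
      _ = x⁻¹ * y₀⁻¹ * x * y₀ := by rw [← hc]; group

lemma ncard_commutatorFiber {K : Subgroup G} {x a : G}
    (hne : (commutatorFiber K x a).Nonempty) :
    (commutatorFiber K x a).ncard = Nat.card (K ⊓ Subgroup.centralizer {x} : Subgroup G) := by
  obtain ⟨y₀, hy₀⟩ := hne
  rw [commutatorFiber_eq_image hy₀, Set.ncard_image_of_injective _ (mul_left_injective y₀),
    ← Nat.card_coe_set_eq]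
  rfl

lemma ncard_commutatorFiber_union_inv [Finite G] (K : Subgroup G) (x a : G) :
    ∃ k ≤ 2, (commutatorFiber K x a ∪ commutatorFiber K x a⁻¹).ncard =
      k * Nat.card (K ⊓ Subgroup.centralizer {x} : Subgroup G) := by
  rcases (commutatorFiber K x a).eq_empty_or_nonempty with h₁ | h₁ <;>
    rcases (commutatorFiber K x a⁻¹).eq_empty_or_nonempty with h₂ | h₂
  · exact ⟨0, by simp [h₁, h₂]⟩
  · exact ⟨1, by simp [h₁, ncard_commutatorFiber h₂]⟩
  · exact ⟨1, by simp [h₂, ncard_commutatorFiber h₁]⟩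
  by_cases ha : a = a⁻¹
  · exact ⟨1, by norm_num, by rw [← ha, Set.union_self, ncard_commutatorFiber h₁, one_mul]⟩
  have hdisj : Disjoint (commutatorFiber K x a) (commutatorFiber K x a⁻¹) :=
    Set.disjoint_left.mpr fun _ hy hy' => ha (hy.2.symm.trans hy'.2)
  exact ⟨2, le_rfl, by rw [Set.ncard_union_eq hdisj, ncard_commutatorFiber h₁,
    ncard_commutatorFiber h₂, two_mul]⟩

end CommutatorFiber

namespace relGraph

variable {G : Type*} [Group G] {H : Subgroup G} {g x : G}

lemma neighborSet_of_mem (hx : x ∈ H) :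
    (relGraph H g).neighborSet x =
      {x}ᶜ \ (commutatorFiber ⊤ x g ∪ commutatorFiber ⊤ x g⁻¹) := by
  ext y
  simp only [SimpleGraph.mem_neighborSet, relGraph, commutatorFiber, Set.mem_sdiff,
    Set.mem_compl_singleton_iff, Set.mem_union, Set.mem_ofPred_eq, Subgroup.mem_top, true_and]
  tauto

lemma neighborSet_of_notMem (hx : x ∉ H) :
    (relGraph H g).neighborSet x =
      (H : Set G) \ (commutatorFiber H x g ∪ commutatorFiber H x g⁻¹) := by
  ext y
  simp only [SimpleGraph.mem_neighborSet, relGraph, commutatorFiber, Set.mem_sdiff,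
    SetLike.mem_coe, Set.mem_union, Set.mem_ofPred_eq]
  constructor
  · rintro ⟨-, hmem, h₁, h₂⟩
    exact ⟨hmem.resolve_left hx, by tauto⟩
  · rintro ⟨hy, hfib⟩
    exact ⟨fun h => hx (h ▸ hy), Or.inr hy, by tauto⟩

lemma ncard_neighborSet_of_mem [Finite G] (hx : x ∈ H) (hg : g ≠ 1) :
    ((relGraph H g).neighborSet x).ncard + 1 +
      (commutatorFiber ⊤ x g ∪ commutatorFiber ⊤ x g⁻¹).ncard = Nat.card G := by
  have hxU : x ∉ commutatorFiber ⊤ x g ∪ commutatorFiber ⊤ x g⁻¹ := by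
    rintro (⟨-, h⟩ | ⟨-, h⟩) <;> simp [eq_comm, hg] at h
  rw [neighborSet_of_mem hx, Set.sdiff_eq, ← Set.compl_union, ← Set.insert_eq,
    add_assoc, add_comm 1, ← Set.ncard_insert_of_notMem hxU, add_comm, Set.ncard_add_ncard_compl]

lemma ncard_neighborSet_of_notMem [Finite G] (hx : x ∉ H) :
    ((relGraph H g).neighborSet x).ncard +
      (commutatorFiber H x g ∪ commutatorFiber H x g⁻¹).ncard = Nat.card H := by
  have hsub : commutatorFiber H x g ∪ commutatorFiber H x g⁻¹ ⊆ H := by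
    rintro y (⟨hy, -⟩ | ⟨hy, -⟩) <;> exact hy
  rw [neighborSet_of_notMem hx, Set.ncard_sdiff hsub, Nat.sub_add_cancel (Set.ncard_le_ncard hsub)]
  exact (Nat.card_coe_set_eq (H : Set G)).symm

end relGraph

lemma isMulCommutative_of_card_lt_six {G : Type*} [Group G] [Finite G] (h : Nat.card G < 6) :
    IsMulCommutative G := by
  have hpos : 0 < Nat.card G := Nat.card_pos
  have of_prime : ∀ p, p.Prime → Nat.card G = p → IsMulCommutative G := fun p hp hG =>
    have : Fact p.Prime := ⟨hp⟩
    have : IsCyclic G := isCyclic_of_prime_card hG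
    letI := IsCyclic.commGroup (α := G)
    inferInstance
  obtain hG | hG | hG | hG | hG : Nat.card G = 1 ∨ Nat.card G = 2 ∨ Nat.card G = 3 ∨
      Nat.card G = 4 ∨ Nat.card G = 5 := by omega
  · have : Subsingleton G := (Nat.card_eq_one_iff_unique.mp hG).1
    exact ⟨⟨fun _ _ => Subsingleton.elim _ _⟩⟩
  · exact of_prime 2 Nat.prime_two hG
  · exact of_prime 3 Nat.prime_three hG
  · have : Fact (Nat.Prime 2) := ⟨Nat.prime_two⟩
    exact IsPGroup.isMulCommutative_of_card_eq_prime_sq (p := 2) hG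
  · exact of_prime 5 Nat.prime_five hG

theorem stmt10_general {G : Type*} [Group G] [Fintype G]
    (hG : ¬ ∀ a b : G, a * b = b * a)
    (H : Subgroup G)
    (hHZ : (H : Set G) ≠ {x : G | x ∈ H ∧ ∀ y : G, x * y = y * x})
    (hH2 : Nat.card H ≠ 2) (hH3 : Nat.card H ≠ 3) (hH6 : Nat.card H ≠ 6)
    (g : G) (hg : g ≠ 1) :
    ∀ x : G, ((relGraph H g).neighborSet x).ncard ≠ 1 := by
  have hH1 : Nat.card H ≠ 1 := fun h => hHZ <| by
    ext z
    simp only [Subgroup.card_eq_one.mp h, Subgroup.coe_bot, Set.mem_singleton_iff,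
      Subgroup.mem_bot, Set.mem_ofPred_eq]
    exact ⟨fun hz => ⟨hz, by simp [hz]⟩, And.left⟩
  intro x hdeg
  by_cases hx : x ∈ H
  · obtain ⟨k, hk, hU⟩ := ncard_commutatorFiber_union_inv ⊤ x g
    have hcard := relGraph.ncard_neighborSet_of_mem hx hg
    rw [hdeg, hU] at hcard
    set c := Nat.card (⊤ ⊓ Subgroup.centralizer {x} : Subgroup G)
    have hc : c ∣ 2 := (Nat.dvd_add_left (dvd_mul_left c k)).mp <| by
      have := Subgroup.card_subgroup_dvd_card (⊤ ⊓ Subgroup.centralizer {x} : Subgroup G)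
      rwa [← hcard] at this
    have hG6 : Nat.card G = 6 := le_antisymm
      (by nlinarith [Nat.le_of_dvd two_pos hc])
      (not_lt.mp fun h => hG (@mul_comm' G _ (isMulCommutative_of_card_lt_six h)))
    have hH : Nat.card H ∈ Nat.divisors 6 :=
      Nat.mem_divisors.mpr ⟨hG6 ▸ Subgroup.card_subgroup_dvd_card H, by norm_num⟩
    rw [show Nat.divisors 6 = {1, 2, 3, 6} from rfl] at hH
    simp only [Finset.mem_insert, Finset.mem_singleton] at hH
    omega
  · obtain ⟨k, hk, hU⟩ := ncard_commutatorFiber_union_inv H x g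
    have hcard := relGraph.ncard_neighborSet_of_notMem (g := g) hx
    rw [hdeg, hU] at hcard
    have hc : Nat.card (H ⊓ Subgroup.centralizer {x} : Subgroup G) = 1 :=
      Nat.dvd_one.mp <| (Nat.dvd_add_left (dvd_mul_left _ k)).mp <| by
        rw [hcard]; exact Subgroup.card_dvd_of_le inf_le_left
    rw [hc] at hcard
    omega

theorem stmt10 {G : Type*} [Group G] [Fintype G]
    (hG : ¬ ∀ a b : G, a * b = b * a)
    (H : Subgroup G)
    (hHZ : (H : Set G) ≠ {x : G | x ∈ H ∧ ∀ y : G, x * y = y * x})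
    (hH2 : Nat.card H ≠ 2) (hH3 : Nat.card H ≠ 3) (hH6 : Nat.card H ≠ 6)
    (g : G) (hgK : ∃ x ∈ H, ∃ y : G, x⁻¹ * y⁻¹ * x * y = g) (hg : g ≠ 1) :
    ∀ x : G, ((relGraph H g).neighborSet x).ncard ≠ 1 :=
  stmt10_general hG H hHZ hH2 hH3 hH6 g hg
end

section
/- Let G be a finite non-abelian group, H a subgroup of G with H ≠ Z(H,G), and g ∈ K(H,G) with g ≠ 1. Then the relative g-noncommuting graph Γ^g_{H,G} is a star graph if and only if G is isomorphic to the symmetric group S₃ and |H| = 2. -/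
/-!
If the graph is a star, its centre is `1`, which is adjacent to every vertex, so every nontrivial
`x ∈ H` satisfies `[x, y] ∈ {g, g⁻¹}` for all `y ∉ {1, x}`. Taking `y = x²` shows that such `x`
are involutions, and then `H = {1, t}`, since for `x ∉ {1, t}` the involutions `x`, `t`, `xt` would
commute. The centralizer of `t` is `{1, t}` and the commutators with `t` take at most the three
values `1, g, g⁻¹`, so `{1, t}` has index `i ≤ 3` and trivial normal core. The action on its
cosets embeds `G`, of order `2i`, into `Perm` of an `i`-element set; this forces `i = 3` and
`G ≅ S₃`. Conversely, in `S₃` the commutators with an involution are checked by computation.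
-/

open Equiv Subgroup
open scoped commutatorElement

namespace SimpleGraph

def IsStarAt {V : Type*} (Γ : SimpleGraph V) (v : V) : Prop :=
  ∀ x y, x ≠ y → (Γ.Adj x y ↔ x = v ∨ y = v)

theorem IsStarAt.eq_of_forall_adj {V : Type*} {Γ : SimpleGraph V} {v w a b : V}
    (hΓ : Γ.IsStarAt v) (hw : ∀ y, y ≠ w → Γ.Adj w y) (hab : a ≠ b) (ha : a ≠ w)
    (hb : b ≠ w) : v = w := by
  by_contra hvw
  obtain ⟨z, hzv, hzw⟩ : ∃ z, z ≠ v ∧ z ≠ w := by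
    by_cases hav : a = v
    · exact ⟨b, fun h => hab (hav.trans h.symm), hb⟩
    · exact ⟨a, hav, ha⟩
  rcases (hΓ w z (Ne.symm hzw)).1 (hw z hzw) with h | h
  · exact hvw h.symm
  · exact hzv h

end SimpleGraph

section CommutatorsPinned

variable {G : Type*} [Group G]

def CommutatorsPinned (t g : G) : Prop :=
  ∀ y, y ≠ 1 → y ≠ t → t⁻¹ * y⁻¹ * t * y = g ∨ t⁻¹ * y⁻¹ * t * y = g⁻¹

variable {t g : G}

theorem CommutatorsPinned.eq_one_or_eq_of_commute (h : CommutatorsPinned t g) (hg : g ≠ 1)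
    {y : G} (hy : Commute t y) : y = 1 ∨ y = t := by
  by_contra! hne
  have hty : t⁻¹ * y⁻¹ * t * y = 1 := by
    rw [mul_assoc, hy.eq, ← mul_assoc, inv_mul_cancel_right, inv_mul_cancel]
  rcases h y hne.1 hne.2 with h' | h'
  · exact hg (h' ▸ hty)
  · exact hg (inv_eq_one.1 (h' ▸ hty))

theorem CommutatorsPinned.mul_self_eq_one (h : CommutatorsPinned t g) (hg : g ≠ 1) :
    t * t = 1 := by
  rcases h.eq_one_or_eq_of_commute hg ((Commute.refl t).mul_right (Commute.refl t)) with h' | h'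
  · exact h'
  · rw [mul_eq_left.1 h', mul_one]

theorem CommutatorsPinned.of_map {G' : Type*} [Group G'] (e : G ≃* G')
    (h : CommutatorsPinned (e t) (e g)) : CommutatorsPinned t g := by
  intro y hy1 hyt
  have he : e (t⁻¹ * y⁻¹ * t * y) = (e t)⁻¹ * (e y)⁻¹ * e t * e y := by simp
  rcases h (e y) (by simpa using hy1) (e.injective.ne hyt) with h' | h'
  · exact .inl (e.injective (he.trans h'))
  · exact .inr (e.injective (by rw [he, h', map_inv]))

end CommutatorsPinned

section PermFinThree

variable {G : Type*} [Group G]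

theorem finiteIndex_centralizer_and_index_le_card {t : G} (S : Finset G) (hS : ∀ y : G, ⁅y, t⁆ ∈ S) :
    (centralizer {t}).FiniteIndex ∧ (centralizer {t}).index ≤ S.card := by
  let f : G ⧸ centralizer {t} → S := fun q =>
    ⟨quotientCentralizerEmbedding t q, QuotientGroup.induction_on q fun y => by
      rw [quotientCentralizerEmbedding_apply]; exact hS y⟩
  have hf : Function.Injective f := fun q q' hqq' =>
    (quotientCentralizerEmbedding t).injective (Subtype.ext (congrArg Subtype.val hqq' :))
  have : Finite (G ⧸ centralizer {t}) := Finite.of_injective f hf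
  exact ⟨finiteIndex_of_finite_quotient,
    (Nat.card_le_card_of_injective f hf).trans_eq (Nat.card_eq_finsetCard S)⟩

theorem nonempty_mulEquiv_perm_fin_three_of_index_le_three (K : Subgroup G)
    [K.FiniteIndex] (hK : Nat.card K = 2) (hcore : K.normalCore = ⊥)
    (hidx : K.index ≤ 3) : Nonempty (G ≃* Perm (Fin 3)) := by
  let φ := MulAction.toPermHom G (G ⧸ K)
  have hφ : Function.Injective φ := by
    rw [← MonoidHom.ker_eq_bot_iff, ← normalCore_eq_ker, hcore]
  have hcardG : Nat.card G = 2 * K.index := by rw [← K.card_mul_index, hK]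
  have hcardPerm : Nat.card (Perm (G ⧸ K)) = K.index.factorial := Nat.card_perm
  have hi : K.index = 3 := by
    have := hcardG ▸ hcardPerm ▸ Nat.card_le_card_of_injective φ hφ
    have : K.index ≠ 0 := FiniteIndex.index_ne_zero
    interval_cases h : K.index <;> simp_all [Nat.factorial]
  have hbij : Function.Bijective φ :=
    (Nat.bijective_iff_injective_and_card φ).2 ⟨hφ, by rw [hcardG, hcardPerm, hi]; rfl⟩
  exact ⟨(MulEquiv.ofBijective φ hbij).trans
    (permCongrHom ((Finite.equivFin (G ⧸ K)).trans (finCongr hi)))⟩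

theorem normalCore_centralizer_eq_bot {t : G} (hC : ∀ y ∈ centralizer {t}, y = 1 ∨ y = t)
    (ht : t ∉ center G) : (centralizer {t}).normalCore = ⊥ := by
  refine eq_bot_iff.2 fun x hx => ?_
  rcases hC x (normalCore_le _ hx) with rfl | rfl
  · exact one_mem _
  refine absurd (Subgroup.mem_center_iff.2 fun b => ?_) ht
  rcases hC _ (hx b) with h | h
  · simp [conj_eq_one_iff.1 h]
  · exact mul_inv_eq_iff_eq_mul.1 h

theorem card_centralizer_eq_two {t : G} (hC : ∀ y ∈ centralizer {t}, y = 1 ∨ y = t)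
    (ht : t ≠ 1) : Nat.card (centralizer {t}) = 2 := by
  have : (centralizer {t} : Set G) = {1, t} := Set.ext fun y =>
    ⟨hC y, by rintro (rfl | rfl); exacts [one_mem _, mem_centralizer_singleton_iff.2 rfl]⟩
  rw [← SetLike.coe_sort_coe, this, Nat.card_coe_set_eq, Set.ncard_pair ht.symm]

theorem CommutatorsPinned.nonempty_mulEquiv_perm_fin_three {t g a : G}
    (h : CommutatorsPinned t g) (hg : g ≠ 1) (ha : t⁻¹ * a⁻¹ * t * a = g) :
    Nonempty (G ≃* Perm (Fin 3)) := by
  classical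
  have hC : ∀ y ∈ centralizer {t}, y = 1 ∨ y = t := fun y hy =>
    h.eq_one_or_eq_of_commute hg (mem_centralizer_singleton_iff.1 hy).symm
  have htinv : t⁻¹ = t := inv_eq_of_mul_eq_one_right (h.mul_self_eq_one hg)
  have hnc : t ∉ center G := fun htc =>
    hg (by rw [← ha, mul_assoc, ← Subgroup.mem_center_iff.1 htc a]; group)
  have ht1 : t ≠ 1 := by rintro rfl; exact hnc (one_mem _)
  have hS : ∀ y : G, ⁅y, t⁆ ∈ ({1, g, g⁻¹} : Finset G) := by
    intro y
    by_cases hy : y⁻¹ = 1 ∨ y⁻¹ = t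
    · rw [inv_eq_one, inv_eq_iff_eq_inv, htinv] at hy
      rcases hy with rfl | rfl <;> simp [commutatorElement_def]
    push Not at hy
    -- `t` is an involution, so `⁅y, t⁆ = [t, y⁻¹]⁻¹` in the paper's convention
    have hy' : ⁅y, t⁆ = (t⁻¹ * y⁻¹⁻¹ * t * y⁻¹)⁻¹ := by
      simp only [commutatorElement_def, mul_inv_rev, inv_inv, htinv, mul_assoc]
    rcases h y⁻¹ hy.1 hy.2 with h' | h' <;> rw [hy', h'] <;> simp
  obtain ⟨_, hidx⟩ := finiteIndex_centralizer_and_index_le_card _ hS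
  exact nonempty_mulEquiv_perm_fin_three_of_index_le_three _ (card_centralizer_eq_two hC ht1)
    (normalCore_centralizer_eq_bot hC hnc) (hidx.trans Finset.card_le_three)

theorem commutatorsPinned_perm_fin_three :
    ∀ t a : Perm (Fin 3), t * t = 1 → t⁻¹ * a⁻¹ * t * a ≠ 1 →
      CommutatorsPinned t (t⁻¹ * a⁻¹ * t * a) := by
  unfold CommutatorsPinned; decide

theorem CommutatorsPinned.of_mulEquiv_perm_fin_three (e : G ≃* Perm (Fin 3)) {t a : G}
    (ht : t * t = 1) (ha : t⁻¹ * a⁻¹ * t * a ≠ 1) : CommutatorsPinned t (t⁻¹ * a⁻¹ * t * a) := by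
  have hea : (e t)⁻¹ * (e a)⁻¹ * e t * e a ≠ 1 := by
    simpa using (map_ne_one_iff e e.injective).2 ha
  refine .of_map e ?_
  simpa using commutatorsPinned_perm_fin_three (e t) (e a) (by rw [← map_mul, ht, map_one]) hea

end PermFinThree

section RelGraph

variable {G : Type*} [Group G] {H : Subgroup G} {g : G}

theorem relGraph_adj_one (hg : g ≠ 1) {y : G} (hy : y ≠ 1) : (relGraph H g).Adj 1 y := by
  refine ⟨hy.symm, .inl H.one_mem, ?_, ?_⟩ <;> simpa [eq_comm] using hg

theorem relGraph_isStarAt_one_iff (hg : g ≠ 1) :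
    (relGraph H g).IsStarAt 1 ↔ ∀ x ∈ H, x ≠ 1 → CommutatorsPinned x g := by
  constructor
  · intro hstar x hx hx1 y hy1 hyx
    have hnadj : ¬ (relGraph H g).Adj x y := fun hadj => by
      rcases (hstar x y hyx.symm).1 hadj with h | h
      exacts [hx1 h, hy1 h]
    by_contra! hne
    exact hnadj ⟨hyx.symm, .inl hx, hne⟩
  · intro hpin x y hxy
    refine ⟨fun ⟨_, hmem, hne, hne'⟩ => ?_, ?_⟩
    · by_contra! h1
      rcases hmem with hx | hy
      · rcases hpin x hx h1.1 y h1.2 hxy.symm with h | h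
        exacts [hne h, hne' h]
      · have hinv : x⁻¹ * y⁻¹ * x * y = (y⁻¹ * x⁻¹ * y * x)⁻¹ := by group
        rcases hpin y hy h1.2 x h1.1 hxy with h | h
        · exact hne' (by rw [hinv, h])
        · exact hne (by rw [hinv, h, inv_inv])
    · rintro (rfl | rfl)
      exacts [relGraph_adj_one hg hxy.symm, (relGraph_adj_one hg hxy).symm]

end RelGraph

section Subgroup

variable {G : Type*} [Group G] {H : Subgroup G}

theorem Subgroup.eq_of_card_eq_two (hH : Nat.card H = 2) {x t : G} (hx : x ∈ H) (ht : t ∈ H)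
    (hx1 : x ≠ 1) (ht1 : t ≠ 1) : x = t := by
  obtain ⟨u, -, hu⟩ := (Nat.card_eq_two_iff' (1 : H)).1 hH
  have := (hu ⟨x, hx⟩ (by simpa using hx1)).trans (hu ⟨t, ht⟩ (by simpa using ht1)).symm
  simpa using this

theorem Subgroup.mul_self_eq_one_of_card_eq_two (hH : Nat.card H = 2) {t : G} (ht : t ∈ H) :
    t * t = 1 := by
  simpa [← sq, hH] using congrArg Subtype.val (pow_card_eq_one' (x := (⟨t, ht⟩ : H)))

theorem card_eq_two_of_commutatorsPinned {g t : G} (hg : g ≠ 1) (ht : t ∈ H) (ht1 : t ≠ 1)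
    (hpin : ∀ x ∈ H, x ≠ 1 → CommutatorsPinned x g) : Nat.card H = 2 := by
  have hmem : ∀ x ∈ H, x = 1 ∨ x = t := by
    intro x hx
    by_contra! hne
    have hxx := (hpin x hx hne.1).mul_self_eq_one hg
    have htt := (hpin t ht ht1).mul_self_eq_one hg
    have hxt1 : x * t ≠ 1 := fun h =>
      hne.2 (by rw [eq_inv_of_mul_eq_one_left h, inv_eq_of_mul_eq_one_right htt])
    have hxtxt := (hpin _ (H.mul_mem hx ht) hxt1).mul_self_eq_one hg
    have hcomm : Commute x t := by
      calc x * t = x * (x * t * (x * t)) * t := by rw [hxtxt, mul_one]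
        _ = (x * x) * t * (x * (t * t)) := by group
        _ = t * x := by rw [hxx, htt]; group
    rcases (hpin x hx hne.1).eq_one_or_eq_of_commute hg hcomm with h | h
    exacts [ht1 h, hne.2 h.symm]
  have : (H : Set G) = {1, t} := Set.ext fun x =>
    ⟨hmem x, by rintro (rfl | rfl); exacts [H.one_mem, ht]⟩
  rw [← SetLike.coe_sort_coe, this, Nat.card_coe_set_eq, Set.ncard_pair ht1.symm]

end Subgroup

theorem stmt13_general {G : Type*} [Group G]
    (H : Subgroup G)
    (g : G) (hgK : ∃ x ∈ H, ∃ y : G, x⁻¹ * y⁻¹ * x * y = g) (hg : g ≠ 1) :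
    (∃ v : G, ∀ x y : G, x ≠ y →
        ((relGraph H g).Adj x y ↔ (x = v ∨ y = v))) ↔
      (Nonempty (G ≃* Equiv.Perm (Fin 3)) ∧ Nat.card H = 2) := by
  obtain ⟨t, ht, a, hta⟩ := hgK
  have hne : t ≠ 1 ∧ a ≠ 1 ∧ t ≠ a := by
    refine ⟨?_, ?_, ?_⟩ <;> rintro rfl <;> simp [← hta] at hg
  constructor
  · rintro ⟨v, hv⟩
    have hv1 : v = 1 := SimpleGraph.IsStarAt.eq_of_forall_adj hv (fun _ => relGraph_adj_one hg)
      hne.2.2 hne.1 hne.2.1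
    have hpin := (relGraph_isStarAt_one_iff hg).1 (hv1 ▸ hv)
    exact ⟨(hpin t ht hne.1).nonempty_mulEquiv_perm_fin_three hg hta,
      card_eq_two_of_commutatorsPinned hg ht hne.1 hpin⟩
  · rintro ⟨⟨e⟩, hH⟩
    refine ⟨1, (relGraph_isStarAt_one_iff hg).2 fun x hx hx1 => ?_⟩
    rw [H.eq_of_card_eq_two hH hx ht hx1 hne.1, ← hta]
    exact .of_mulEquiv_perm_fin_three e (H.mul_self_eq_one_of_card_eq_two hH ht) (hta ▸ hg)

theorem stmt13 {G : Type*} [Group G] [Fintype G]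
    (hG : ¬ ∀ a b : G, a * b = b * a)
    (H : Subgroup G)
    (hHZ : (H : Set G) ≠ {x : G | x ∈ H ∧ ∀ y : G, x * y = y * x})
    (g : G) (hgK : ∃ x ∈ H, ∃ y : G, x⁻¹ * y⁻¹ * x * y = g) (hg : g ≠ 1) :
    (∃ v : G, ∀ x y : G, x ≠ y →
        ((relGraph H g).Adj x y ↔ (x = v ∨ y = v))) ↔
      (Nonempty (G ≃* Equiv.Perm (Fin 3)) ∧ Nat.card H = 2) :=
  stmt13_general H g hgK hg
end

section
/- Let G be a finite non-abelian group, H a subgroup of G with H ≠ Z(H,G), and g ∈ K(H,G) with g ≠ 1. Then the relative g-noncommuting graph Γ^g_{H,G} is not a complete graph, i.e. there exist two distinct vertices of Γ^g_{H,G} that are not adjacent. -/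
theorem ne_of_commutator_ne_one {G : Type*} [Group G] {x y : G}
    (h : x⁻¹ * y⁻¹ * x * y ≠ 1) : x ≠ y := by
  rintro rfl
  simp at h

theorem relGraph_not_adj_of_commutator_eq {G : Type*} [Group G] (H : Subgroup G) {x y g : G}
    (h : x⁻¹ * y⁻¹ * x * y = g) : ¬ (relGraph H g).Adj x y :=
  fun hadj => hadj.2.2.1 h

theorem stmt14_general {G : Type*} [Group G]
    (H : Subgroup G)
    (g : G) (hgK : ∃ x ∈ H, ∃ y : G, x⁻¹ * y⁻¹ * x * y = g) (hg : g ≠ 1) :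
    ∃ x y : G, x ≠ y ∧ ¬ (relGraph H g).Adj x y := by
  obtain ⟨x, -, y, rfl⟩ := hgK
  exact ⟨x, y, ne_of_commutator_ne_one hg, relGraph_not_adj_of_commutator_eq H rfl⟩

theorem stmt14 {G : Type*} [Group G] [Fintype G]
    (hG : ¬ ∀ a b : G, a * b = b * a)
    (H : Subgroup G)
    (hHZ : (H : Set G) ≠ {x : G | x ∈ H ∧ ∀ y : G, x * y = y * x})
    (g : G) (hgK : ∃ x ∈ H, ∃ y : G, x⁻¹ * y⁻¹ * x * y = g) (hg : g ≠ 1) :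
    ∃ x y : G, x ≠ y ∧ ¬ (relGraph H g).Adj x y :=
  stmt14_general H g hgK hg
end

section
/- Let G be a finite non-abelian group, H a normal subgroup of G, and g, h ∈ G. If g and h are conjugate in G, then the relative g-noncommuting graph Γ^g_{H,G} and the relative h-noncommuting graph Γ^h_{H,G} are isomorphic as graphs. Moreover, if h = x⁻¹gx, then the map a ↦ x⁻¹ax is such an isomorphism. -/
/-
A group isomorphism `e` carrying `H` onto `H'` maps commutators to commutators, so it is a graph
isomorphism from `relGraph H g` to `relGraph H' (e g)`. Conjugation by `x` is such an automorphism
with `H' = H` because `H` is normal.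
-/

theorem relGraph_adj_map_iff {G G' : Type*} [Group G] [Group G'] (e : G ≃* G')
    {H : Subgroup G} {H' : Subgroup G'} (hH : ∀ a, e a ∈ H' ↔ a ∈ H) (g : G) {a b : G} :
    (relGraph H' (e g)).Adj (e a) (e b) ↔ (relGraph H g).Adj a b := by
  have hcomm : (e a)⁻¹ * (e b)⁻¹ * e a * e b = e (a⁻¹ * b⁻¹ * a * b) := by
    simp only [map_mul, map_inv]
  simp only [relGraph, hcomm, hH, ← map_inv e g, e.injective.ne_iff]

def relGraphIsoOfMulEquiv {G G' : Type*} [Group G] [Group G'] (e : G ≃* G')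
    {H : Subgroup G} {H' : Subgroup G'} (hH : ∀ a, e a ∈ H' ↔ a ∈ H) {g : G} {g' : G'}
    (hg : e g = g') : relGraph H g ≃g relGraph H' g' where
  toEquiv := e.toEquiv
  map_rel_iff' := hg ▸ relGraph_adj_map_iff e hH g

theorem Subgroup.Normal.conj_inv_mem_iff {G : Type*} [Group G] {H : Subgroup G} (hH : H.Normal)
    (x a : G) : x⁻¹ * a * x ∈ H ↔ a ∈ H := by
  rw [mul_assoc, hH.mem_comm_iff, mul_inv_cancel_right]

theorem stmt15_general {G : Type*} [Group G]
    (H : Subgroup G) [H.Normal]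
    (g h x : G) (hconj : h = x⁻¹ * g * x) :
    ∃ φ : relGraph H g ≃g relGraph H h, ∀ a : G, φ a = x⁻¹ * a * x := by
  have hH (a : G) : (MulAut.conj x)⁻¹ a ∈ H ↔ a ∈ H := by
    rw [MulAut.conj_inv_apply]
    exact ‹H.Normal›.conj_inv_mem_iff x a
  exact ⟨relGraphIsoOfMulEquiv _ hH (by rw [hconj, MulAut.conj_inv_apply]), MulAut.conj_inv_apply x⟩

theorem stmt15 {G : Type*} [Group G] [Fintype G]
    (hG : ¬ ∀ a b : G, a * b = b * a)
    (H : Subgroup G) [H.Normal]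
    (g h x : G) (hconj : h = x⁻¹ * g * x) :
    ∃ φ : relGraph H g ≃g relGraph H h, ∀ a : G, φ a = x⁻¹ * a * x :=
  stmt15_general H g h x hconj
end

section
/- Let G be a finite non-abelian group, H a non-trivial subgroup of G with H ≠ Z(H,G), and g ∈ K(H,G) with g ≠ 1 and g² ≠ 1. If g ∈ H, then twice the number of edges of Γ^g_{H,G} equals 2(|H||G| − N_g(H,G) − N_{g⁻¹}(H,G)) − (|H|² − N_g(H) − N_{g⁻¹}(H)) − |H|; if g ∈ G \ H, then twice the number of edges of Γ^g_{H,G} equals 2(|H||G| − N_g(H,G) − N_{g⁻¹}(H,G)) − |H|² − |H|. -/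
/-!
Twice the number of edges is the number of ordered adjacent pairs. Adding back the `|H|`
diagonal pairs `(x, x)`, `x ∈ H` (whose commutator is `1 ≠ g, g⁻¹`), gives the pairs with a
coordinate in `H` whose commutator avoids `g` and `g⁻¹`. By inclusion–exclusion these number
`2 B - C`, where `B` counts such pairs in `H × G` (the pairs in `G × H` correspond to them
under swapping, which inverts the commutator) and `C` those in `H × H`. Since `g ≠ g⁻¹`,
`B = |H||G| - N_g(H,G) - N_{g⁻¹}(H,G)` and `C = |H|² - N_g(H) - N_{g⁻¹}(H)`; when `g ∉ H`,
both `N_g(H)` and `N_{g⁻¹}(H)` vanish because `H` contains the commutators of its elements.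
-/

open Set

theorem SimpleGraph.two_mul_ncard_edgeSet {V : Type*} [Finite V] (Γ : SimpleGraph V) :
    2 * Γ.edgeSet.ncard = {p : V × V | Γ.Adj p.1 p.2}.ncard := by
  classical
  have := Fintype.ofFinite V
  rw [← Γ.coe_edgeFinset, ncard_coe_finset, Γ.two_mul_card_edgeFinset, ← ncard_coe_finset,
    Finset.coe_filter]
  simp

theorem Set.ncard_eq_add_ncard_eq_add_ncard_ne_ne {α β : Type*} [Finite α] (P : α → Prop)
    (f : α → β) {a b : β} (hab : a ≠ b) :
    {x | P x ∧ f x = a}.ncard + {x | P x ∧ f x = b}.ncard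
      + {x | P x ∧ f x ≠ a ∧ f x ≠ b}.ncard = {x | P x}.ncard := by
  rw [← ncard_union_eq, ← ncard_union_eq]
  · congr 1
    ext x
    simp only [mem_union, mem_ofPred_eq]
    by_cases ha : f x = a <;> by_cases hb : f x = b <;> simp [ha, hb, hab, hab.symm]
  · exact disjoint_left.2 fun x hx hx' => by
      rcases hx with hx | hx <;> simp_all
  · exact disjoint_left.2 fun x hx hx' => hab (hx.2.symm.trans hx'.2)

section RelGraph

variable {G : Type*} [Group G]

def CommAvoids (g : G) (p : G × G) : Prop :=
  p.1⁻¹ * p.2⁻¹ * p.1 * p.2 ≠ g ∧ p.1⁻¹ * p.2⁻¹ * p.1 * p.2 ≠ g⁻¹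

theorem commAvoids_swap {g : G} {p : G × G} : CommAvoids g p.swap ↔ CommAvoids g p := by
  have h : p.2⁻¹ * p.1⁻¹ * p.2 * p.1 = (p.1⁻¹ * p.2⁻¹ * p.1 * p.2)⁻¹ := by group
  simp only [CommAvoids, Prod.fst_swap, Prod.snd_swap, h, ne_eq, inv_eq_iff_eq_inv, inv_inv]
  exact and_comm

theorem commAvoids_diag {g : G} (hg : g ≠ 1) (x : G) : CommAvoids g (x, x) := by
  simp [CommAvoids, mul_assoc, hg.symm, hg]

theorem ne_inv_of_sq_ne_one {g : G} (hg : g ^ 2 ≠ 1) : g ≠ g⁻¹ := fun h =>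
  hg (by rwa [sq, mul_eq_one_iff_eq_inv])

variable (H : Subgroup G)

theorem ncard_setOf_fst_mem : {p : G × G | p.1 ∈ H}.ncard = Nat.card H * Nat.card G := by
  rw [← SetLike.coe_sort_coe, Nat.card_coe_set_eq, ← ncard_univ, ← ncard_prod]
  congr 1
  ext p
  simp

theorem ncard_setOf_fst_mem_and_snd_mem :
    {p : G × G | p.1 ∈ H ∧ p.2 ∈ H}.ncard = Nat.card H ^ 2 := by
  rw [sq, ← SetLike.coe_sort_coe, Nat.card_coe_set_eq, ← ncard_prod]
  rfl

theorem setOf_mem_mem_comm_eq_empty_of_notMem {u : G} (hu : u ∉ H) :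
    {p : G × G | p.1 ∈ H ∧ p.2 ∈ H ∧ p.1⁻¹ * p.2⁻¹ * p.1 * p.2 = u} = ∅ :=
  eq_empty_of_forall_notMem fun _ ⟨hx, hy, hu'⟩ =>
    hu (hu' ▸ H.mul_mem (H.mul_mem (H.mul_mem (H.inv_mem hx) (H.inv_mem hy)) hx) hy)

variable [Finite G] {g : G}

theorem ncard_adj_relGraph_add_card (hg : g ≠ 1) :
    {p : G × G | (relGraph H g).Adj p.1 p.2}.ncard + Nat.card H
      = {p : G × G | (p.1 ∈ H ∨ p.2 ∈ H) ∧ CommAvoids g p}.ncard := by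
  have hdiag : Function.Injective fun x : G => (x, x) := fun _ _ h => congrArg Prod.fst h
  rw [← SetLike.coe_sort_coe, Nat.card_coe_set_eq, ← ncard_image_of_injective _ hdiag,
    ← ncard_union_eq]
  · congr 1
    ext ⟨x, y⟩
    simp only [mem_union, mem_ofPred_eq, mem_image, SetLike.mem_coe, Prod.mk.injEq]
    constructor
    · rintro (⟨-, hxy, hp⟩ | ⟨x, hx, rfl, rfl⟩)
      · exact ⟨hxy, hp⟩
      · exact ⟨Or.inl hx, commAvoids_diag hg x⟩
    · rintro ⟨hxy, hp⟩
      by_cases h : x = y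
      · subst h
        exact Or.inr ⟨x, hxy.elim id id, rfl, rfl⟩
      · exact Or.inl ⟨h, hxy, hp⟩
  · exact disjoint_left.2 fun p hp ⟨x, _, hx⟩ => hp.1 (by rw [← hx])

theorem ncard_mem_or_mem_add_ncard_mem_and_mem :
    {p : G × G | (p.1 ∈ H ∨ p.2 ∈ H) ∧ CommAvoids g p}.ncard
      + {p : G × G | (p.1 ∈ H ∧ p.2 ∈ H) ∧ CommAvoids g p}.ncard
      = 2 * {p : G × G | p.1 ∈ H ∧ CommAvoids g p}.ncard := by
  have hswap : {p : G × G | p.2 ∈ H ∧ CommAvoids g p}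
      = Prod.swap '' {p : G × G | p.1 ∈ H ∧ CommAvoids g p} := by
    rw [image_swap_eq_preimage_swap]
    ext p
    exact and_congr_right' commAvoids_swap.symm
  have hunion := ncard_union_add_ncard_inter {p : G × G | p.1 ∈ H ∧ CommAvoids g p}
    {p : G × G | p.2 ∈ H ∧ CommAvoids g p}
  rw [hswap, ncard_image_of_injective _ Prod.swap_injective, ← two_mul, ← hswap] at hunion
  rw [← hunion]
  congr 2 <;> ext p <;> simp only [mem_union, mem_inter_iff, mem_ofPred_eq] <;> tauto

theorem two_mul_ncard_edgeSet_relGraph (hg1 : g ≠ 1) (hg2 : g ^ 2 ≠ 1) :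
    2 * ((relGraph H g).edgeSet.ncard : ℤ)
      = 2 * ((Nat.card H : ℤ) * (Nat.card G : ℤ)
            - ({p : G × G | p.1 ∈ H ∧ p.1⁻¹ * p.2⁻¹ * p.1 * p.2 = g}.ncard : ℤ)
            - ({p : G × G | p.1 ∈ H ∧ p.1⁻¹ * p.2⁻¹ * p.1 * p.2 = g⁻¹}.ncard : ℤ))
        - ((Nat.card H : ℤ) ^ 2
            - ({p : G × G | p.1 ∈ H ∧ p.2 ∈ H ∧ p.1⁻¹ * p.2⁻¹ * p.1 * p.2 = g}.ncard : ℤ)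
            - ({p : G × G | p.1 ∈ H ∧ p.2 ∈ H ∧ p.1⁻¹ * p.2⁻¹ * p.1 * p.2 = g⁻¹}.ncard : ℤ))
        - (Nat.card H : ℤ) := by
  have hpart := ncard_eq_add_ncard_eq_add_ncard_ne_ne (fun p : G × G => p.1 ∈ H)
    (fun p : G × G => p.1⁻¹ * p.2⁻¹ * p.1 * p.2) (ne_inv_of_sq_ne_one hg2)
  have hpartH := ncard_eq_add_ncard_eq_add_ncard_ne_ne (fun p : G × G => p.1 ∈ H ∧ p.2 ∈ H)
    (fun p : G × G => p.1⁻¹ * p.2⁻¹ * p.1 * p.2) (ne_inv_of_sq_ne_one hg2)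
  simp only [and_assoc] at hpartH
  rw [ncard_setOf_fst_mem] at hpart
  rw [ncard_setOf_fst_mem_and_snd_mem] at hpartH
  have hdiag := ncard_adj_relGraph_add_card H hg1
  rw [← SimpleGraph.two_mul_ncard_edgeSet] at hdiag
  have hincl := ncard_mem_or_mem_add_ncard_mem_and_mem H (g := g)
  simp only [CommAvoids, and_assoc] at hdiag hincl
  zify at hpart hpartH hdiag hincl
  linarith

end RelGraph

theorem stmt18_general {G : Type*} [Group G] [Fintype G]
    (H : Subgroup G)
    (g : G)
    (hg1 : g ≠ 1) (hg2 : g ^ 2 ≠ 1) :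
    (g ∈ H →
      2 * (((relGraph H g).edgeSet.ncard : ℤ))
        = 2 * ((Nat.card H : ℤ) * (Nat.card G : ℤ)
              - ({p : G × G | p.1 ∈ H ∧ p.1⁻¹ * p.2⁻¹ * p.1 * p.2 = g}.ncard : ℤ)
              - ({p : G × G | p.1 ∈ H ∧ p.1⁻¹ * p.2⁻¹ * p.1 * p.2 = g⁻¹}.ncard : ℤ))
          - ((Nat.card H : ℤ) ^ 2
              - ({p : G × G | p.1 ∈ H ∧ p.2 ∈ H ∧ p.1⁻¹ * p.2⁻¹ * p.1 * p.2 = g}.ncard : ℤ)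
              - ({p : G × G | p.1 ∈ H ∧ p.2 ∈ H ∧ p.1⁻¹ * p.2⁻¹ * p.1 * p.2 = g⁻¹}.ncard : ℤ))
          - (Nat.card H : ℤ)) ∧
    (g ∉ H →
      2 * (((relGraph H g).edgeSet.ncard : ℤ))
        = 2 * ((Nat.card H : ℤ) * (Nat.card G : ℤ)
              - ({p : G × G | p.1 ∈ H ∧ p.1⁻¹ * p.2⁻¹ * p.1 * p.2 = g}.ncard : ℤ)
              - ({p : G × G | p.1 ∈ H ∧ p.1⁻¹ * p.2⁻¹ * p.1 * p.2 = g⁻¹}.ncard : ℤ))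
          - (Nat.card H : ℤ) ^ 2 - (Nat.card H : ℤ)) := by
  have hmain := two_mul_ncard_edgeSet_relGraph H hg1 hg2
  refine ⟨fun _ => hmain, fun hgH => ?_⟩
  rwa [setOf_mem_mem_comm_eq_empty_of_notMem H hgH,
    setOf_mem_mem_comm_eq_empty_of_notMem H (inv_mem_iff.not.2 hgH),
    ncard_empty, Nat.cast_zero, sub_zero, sub_zero] at hmain

theorem stmt18 {G : Type*} [Group G] [Fintype G]
    (hG : ¬ ∀ a b : G, a * b = b * a)
    (H : Subgroup G) (hH : H ≠ ⊥)
    (hHZ : (H : Set G) ≠ {x : G | x ∈ H ∧ ∀ y : G, x * y = y * x})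
    (g : G) (hgK : ∃ x ∈ H, ∃ y : G, x⁻¹ * y⁻¹ * x * y = g)
    (hg1 : g ≠ 1) (hg2 : g ^ 2 ≠ 1) :
    (g ∈ H →
      2 * (((relGraph H g).edgeSet.ncard : ℤ))
        = 2 * ((Nat.card H : ℤ) * (Nat.card G : ℤ)
              - ({p : G × G | p.1 ∈ H ∧ p.1⁻¹ * p.2⁻¹ * p.1 * p.2 = g}.ncard : ℤ)
              - ({p : G × G | p.1 ∈ H ∧ p.1⁻¹ * p.2⁻¹ * p.1 * p.2 = g⁻¹}.ncard : ℤ))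
          - ((Nat.card H : ℤ) ^ 2
              - ({p : G × G | p.1 ∈ H ∧ p.2 ∈ H ∧ p.1⁻¹ * p.2⁻¹ * p.1 * p.2 = g}.ncard : ℤ)
              - ({p : G × G | p.1 ∈ H ∧ p.2 ∈ H ∧ p.1⁻¹ * p.2⁻¹ * p.1 * p.2 = g⁻¹}.ncard : ℤ))
          - (Nat.card H : ℤ)) ∧
    (g ∉ H →
      2 * (((relGraph H g).edgeSet.ncard : ℤ))
        = 2 * ((Nat.card H : ℤ) * (Nat.card G : ℤ)
              - ({p : G × G | p.1 ∈ H ∧ p.1⁻¹ * p.2⁻¹ * p.1 * p.2 = g}.ncard : ℤ)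
              - ({p : G × G | p.1 ∈ H ∧ p.1⁻¹ * p.2⁻¹ * p.1 * p.2 = g⁻¹}.ncard : ℤ))
          - (Nat.card H : ℤ) ^ 2 - (Nat.card H : ℤ)) :=
  stmt18_general H g hg1 hg2
end
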